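/- With B and ψ the relativised collapsing hierarchy: if α ∈ B(α) then ψ(α+1) = (ψ α)^Γ, the least strongly critical ordinal above ψ(α); and if α ∉ B(α) then ψ(α+1) = ψ(α) and B(α+1) = B(α). -/

import Mathlib

/-!
If `α ∉ B(α)`, the clause for `ψ↾(α+1)` adds nothing to `B(α)`, so `B(α+1) = B(α)`.

If `α ∈ B(α)`, then `ψ(α) ∈ B(α+1)`. Let `γ = ψ(α)^Γ`. Every ordinal is generated by `+` and `φ`
from `0` and the strongly critical ordinals below it, and those below `γ` are at most `ψ(α)`, so
`B(α+1)` contains every ordinal below `γ`. On the other hand the ordinals different from `γ`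
contain all generators of `B(α+1)` (`Γ_θ < ψ(α) < γ`, `ψ(ξ) ≤ ψ(α)` for `ξ ≤ α`, and `γ < Ω` since
`B(α)` has at most `max(ℵ₀, |θ|) < |Ω|` elements and `Ω` is a regular uncountable cardinal, hence
closed under `φ`), and they are closed under `+` and `φ` because `γ` is strongly critical. Hence
`ψ(α+1) = γ`.
-/

open Ordinal

/-- Old Mathlib `Ordinal.derivBFamily` (removed), restated with its old definition. -/
noncomputable def derivBFamily.{u, v} (o : Ordinal.{u})
    (f : ∀ b < o, Ordinal.{max u v} → Ordinal.{max u v}) :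
    Ordinal.{max u v} → Ordinal.{max u v} :=
  derivFamily (familyOfBFamily o f)

/-- The binary Veblen function: `veblen 0 β = ω ^ β`, and for `α > 0`,
`veblen α` enumerates the common fixed points of `veblen γ` for `γ < α`. -/
noncomputable def veblen : Ordinal → Ordinal → Ordinal :=
  WellFounded.fix Ordinal.lt_wf
    (fun α ih => if α = 0 then fun β => omega0 ^ β
      else derivBFamily.{0,0} α (fun ξ h => ih ξ h))

/-- The set of strongly critical ordinals. -/
def StronglyCritical (γ : Ordinal) : Prop := _root_.veblen γ 0 = γ

/-- `Gamma β` is the `β`-th strongly critical ordinal. -/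
noncomputable def Gamma : Ordinal → Ordinal :=
  enumOrd {γ | StronglyCritical γ}

/-- The least uncountable cardinal (as an ordinal) greater than `θ`. -/
noncomputable def OmegaB (θ : Ordinal) : Ordinal :=
  sInf {o | θ < o ∧ o.card.ord = o ∧ Cardinal.aleph0 < o.card}

/-- Closure of `{0, Ω} ∪ {Γ_β : β ≤ θ}` under `+`, `veblen` and the
given partial collapsing function `f` on arguments below `α`. -/
def closB (θ α : Ordinal) (f : ∀ ξ, ξ < α → Ordinal) : Set Ordinal :=
  ⋂₀ {S : Set Ordinal |
      0 ∈ S ∧ OmegaB θ ∈ S ∧ (∀ β ≤ θ, Gamma β ∈ S) ∧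
      (∀ x ∈ S, ∀ y ∈ S, x + y ∈ S) ∧
      (∀ x ∈ S, ∀ y ∈ S, _root_.veblen x y ∈ S) ∧
      (∀ ξ (h : ξ < α), ξ ∈ S → f ξ h ∈ S)}

/-- The relativised collapsing function `ψ_θ`. -/
noncomputable def psiB (θ : Ordinal) : Ordinal → Ordinal :=
  WellFounded.fix Ordinal.lt_wf
    (fun α ih => sInf {β | β ∉ closB θ α (fun ξ h => ih ξ h)})

/-- The relativised collapsing hierarchy `B_θ(α)`. -/
def BB (θ α : Ordinal) : Set Ordinal :=
  closB θ α (fun ξ _ => psiB θ ξ)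

/-- The least strongly critical ordinal strictly above `δ`. -/
noncomputable def gammaSucc (δ : Ordinal) : Ordinal :=
  sInf {γ | δ < γ ∧ StronglyCritical γ}

namespace Ordinal

theorem veblen_eq_derivFamily_toType {o : Ordinal} (h : o ≠ 0) :
    veblen o = derivFamily fun x : o.ToType => veblen (ToType.mk.symm x).1 := by
  rw [veblen_of_ne_zero h, derivFamily_eq_enumOrd fun _ => isNormal_veblen _,
    derivFamily_eq_enumOrd fun _ => isNormal_veblen _,
    ToType.mk.symm.surjective.iInter_comp fun x : Set.Iio o => Function.fixedPoints (veblen x.1)]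

theorem veblen_lt_ord {c : Cardinal} (hc : c.IsRegular) (hc' : Cardinal.aleph0 < c)
    {a b : Ordinal} (ha : a < c.ord) (hb : b < c.ord) : veblen a b < c.ord := by
  induction a using WellFoundedLT.induction generalizing b with
  | _ a ih =>
  rcases eq_or_ne a 0 with rfl | h
  · rw [veblen_zero_apply]
    exact isPrincipal_opow_ord hc.aleph0_le (Cardinal.omega0_lt_ord.2 hc') hb
  · rw [veblen_eq_derivFamily_toType h]
    refine Cardinal.derivFamily_lt_ord hc ?_ hc'.ne'
      (fun x _ hb => ih _ (ToType.mk.symm x).2 ((ToType.mk.symm x).2.trans ha) hb) hb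
    rwa [Cardinal.mk_toType, ← Cardinal.lt_ord]

theorem gamma_lt_ord {c : Cardinal} (hc : c.IsRegular) (hc' : Cardinal.aleph0 < c) {a : Ordinal}
    (ha : a < c.ord) : Γ_ a < c.ord :=
  Cardinal.deriv_lt_ord hc hc'.ne' (fun _ hi => veblen_lt_ord hc hc' hi hc.ord_pos) ha

theorem lt_gamma_succ (a : Ordinal) : a < Γ_ (Order.succ a) :=
  strictMono_gamma.le_apply.trans_lt (gamma_lt_gamma.2 (Order.lt_succ a))

theorem veblen_gamma_of_lt {a o : Ordinal} (h : a < Γ_ o) : veblen a (Γ_ o) = Γ_ o :=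
  veblen_eq_of_lt_invVeblen₁ (by rwa [invVeblen₁_gamma])

theorem omega0_opow_gamma (o : Ordinal) : ω ^ Γ_ o = Γ_ o := by
  rw [← veblen_zero_apply]
  exact veblen_gamma_of_lt gamma_pos

theorem add_ne_gamma {o x y : Ordinal} (hx : x ≠ Γ_ o) (hy : y ≠ Γ_ o) : x + y ≠ Γ_ o := by
  rcases hx.lt_or_gt with hx | hx
  · rcases hy.lt_or_gt with hy | hy
    · rw [← omega0_opow_gamma] at hx hy ⊢
      exact (isPrincipal_add_omega0_opow _ hx hy).ne
    · exact (hy.trans_le le_add_self).ne'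
  · exact (hx.trans_le le_self_add).ne'

theorem veblen_ne_gamma {o x y : Ordinal} (hx : x ≠ Γ_ o) (hy : y ≠ Γ_ o) :
    veblen x y ≠ Γ_ o := by
  rcases hx.lt_or_gt with hx | hx
  · conv_rhs => rw [← veblen_gamma_of_lt hx]
    exact (veblen_injective x).ne hy
  · refine (lt_of_lt_of_le ?_ ((veblen_right_strictMono x).monotone zero_le)).ne'
    conv_lhs => rw [← veblen_gamma_zero o]
    exact veblen_zero_strictMono hx

theorem exists_veblen_eq_of_isPrincipal_add {δ : Ordinal} (hδ : IsPrincipal (· + ·) δ)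
    (h0 : δ ≠ 0) (hΓ : δ ∉ Set.range gamma) : ∃ a < δ, ∃ b < δ, veblen a b = δ := by
  obtain ⟨x, rfl⟩ := (isPrincipal_add_iff_zero_or_omega0_opow.1 hδ).resolve_left h0
  dsimp only at h0 hΓ ⊢
  refine ⟨invVeblen₁ x, ?_, invVeblen₂ x, invVeblen₂_lt x, veblen_invVeblen₁_invVeblen₂ x⟩
  rcases (right_le_opow x one_lt_omega0).lt_or_eq with hx | hx
  · exact (invVeblen₁_le x).trans_lt hx
  · rw [← hx] at h0 hΓ ⊢
    exact invVeblen₁_lt_iff.2 ⟨h0, hΓ⟩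

theorem mem_of_forall_gamma_le_mem {S : Set Ordinal} (h0 : 0 ∈ S)
    (hadd : ∀ x ∈ S, ∀ y ∈ S, x + y ∈ S) (hveblen : ∀ x ∈ S, ∀ y ∈ S, veblen x y ∈ S)
    {δ : Ordinal} (hΓ : ∀ o, Γ_ o ≤ δ → Γ_ o ∈ S) : δ ∈ S := by
  induction δ using WellFoundedLT.induction with
  | _ δ ih =>
  have ih' : ∀ x < δ, x ∈ S := fun x hx => ih x hx fun o ho => hΓ o (ho.trans hx.le)
  by_cases hδΓ : δ ∈ Set.range gamma
  · obtain ⟨o, rfl⟩ := hδΓ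
    exact hΓ o le_rfl
  rcases eq_or_ne δ 0 with rfl | hδ0
  · exact h0
  by_cases hp : IsPrincipal (· + ·) δ
  · obtain ⟨a, ha, b, hb, rfl⟩ := exists_veblen_eq_of_isPrincipal_add hp hδ0 hδΓ
    exact hveblen a (ih' a ha) b (ih' b hb)
  · obtain ⟨x, hx, y, hy, rfl⟩ := exists_lt_add_of_not_isPrincipal_add hp
    exact hadd x (ih' x hx) y (ih' y hy)

end Ordinal


theorem veblen_eq_ordinalVeblen : _root_.veblen = Ordinal.veblen := by
  funext α
  induction α using WellFoundedLT.induction with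
  | _ α ih =>
  rw [_root_.veblen, WellFounded.fix_eq]
  split_ifs with h
  · rw [h, Ordinal.veblen_zero]
  · rw [Ordinal.veblen_eq_derivFamily_toType h]
    exact congrArg derivFamily (funext fun x => ih _ (ToType.mk.symm x).2)

theorem stronglyCritical_iff_mem_range_gamma {γ : Ordinal} :
    StronglyCritical γ ↔ γ ∈ Set.range gamma := by
  rw [StronglyCritical, veblen_eq_ordinalVeblen, mem_range_gamma]

theorem Gamma_eq_gamma : Gamma = gamma := by
  have h : {γ | StronglyCritical γ} = Set.range gamma :=
    Set.ext fun _ => stronglyCritical_iff_mem_range_gamma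
  rw [Gamma, h, enumOrd_range strictMono_gamma]

section gammaSucc

variable (δ : Ordinal)

theorem gammaSucc_spec : δ < gammaSucc δ ∧ gammaSucc δ ∈ Set.range gamma := by
  rw [← stronglyCritical_iff_mem_range_gamma]
  exact csInf_mem (s := {γ | δ < γ ∧ StronglyCritical γ})
    ⟨_, lt_gamma_succ δ, stronglyCritical_iff_mem_range_gamma.2 (Set.mem_range_self _)⟩

theorem lt_gammaSucc : δ < gammaSucc δ := (gammaSucc_spec δ).1

theorem gammaSucc_mem_range_gamma : gammaSucc δ ∈ Set.range gamma := (gammaSucc_spec δ).2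

theorem gammaSucc_le_gamma {o : Ordinal} (h : δ < Γ_ o) : gammaSucc δ ≤ Γ_ o :=
  csInf_le' ⟨h, stronglyCritical_iff_mem_range_gamma.2 (Set.mem_range_self o)⟩

end gammaSucc

theorem OmegaB_eq_ord (θ : Ordinal) :
    OmegaB θ = (Order.succ (max Cardinal.aleph0 θ.card)).ord := by
  refine IsLeast.csInf_eq ⟨⟨?_, by rw [Cardinal.card_ord], ?_⟩, ?_⟩
  · exact Cardinal.lt_ord.2 ((le_max_right _ _).trans_lt (Order.lt_succ _))
  · rw [Cardinal.card_ord]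
    exact (le_max_left _ _).trans_lt (Order.lt_succ _)
  · rintro o ⟨hθ, ho, hω⟩
    rw [← ho, Cardinal.ord_le_ord, Order.succ_le_iff]
    exact max_lt hω (by rwa [← Cardinal.lt_ord, ho])

theorem gammaSucc_lt_OmegaB {θ x : Ordinal} (hx : x < OmegaB θ) : gammaSucc x < OmegaB θ := by
  rw [OmegaB_eq_ord] at hx ⊢
  have hreg := Cardinal.isRegular_succ (le_max_left Cardinal.aleph0 θ.card)
  have hω : Cardinal.aleph0 < Order.succ (max Cardinal.aleph0 θ.card) :=
    (le_max_left _ _).trans_lt (Order.lt_succ _)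
  exact (gammaSucc_le_gamma x (lt_gamma_succ x)).trans_lt
    (gamma_lt_ord hreg hω ((Cardinal.isSuccLimit_ord hreg.aleph0_le).succ_lt hx))

section closB

variable {θ α : Ordinal} {f : ∀ ξ, ξ < α → Ordinal}

theorem closB_subset {S : Set Ordinal} (h0 : 0 ∈ S) (hΩ : OmegaB θ ∈ S)
    (hΓ : ∀ β ≤ θ, Gamma β ∈ S) (hadd : ∀ x ∈ S, ∀ y ∈ S, x + y ∈ S)
    (hveblen : ∀ x ∈ S, ∀ y ∈ S, Ordinal.veblen x y ∈ S)
    (hf : ∀ ξ (h : ξ < α), ξ ∈ S → f ξ h ∈ S) : closB θ α f ⊆ S :=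
  Set.sInter_subset_of_mem ⟨h0, hΩ, hΓ, hadd, by rwa [veblen_eq_ordinalVeblen], hf⟩

theorem zero_mem_closB : 0 ∈ closB θ α f := fun _ hS => hS.1

theorem OmegaB_mem_closB : OmegaB θ ∈ closB θ α f := fun _ hS => hS.2.1

theorem Gamma_mem_closB {β : Ordinal} (h : β ≤ θ) : Gamma β ∈ closB θ α f :=
  fun _ hS => hS.2.2.1 β h

theorem add_mem_closB {x y : Ordinal} (hx : x ∈ closB θ α f) (hy : y ∈ closB θ α f) :
    x + y ∈ closB θ α f :=
  fun S hS => hS.2.2.2.1 x (hx S hS) y (hy S hS)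

theorem veblen_mem_closB {x y : Ordinal} (hx : x ∈ closB θ α f) (hy : y ∈ closB θ α f) :
    Ordinal.veblen x y ∈ closB θ α f := by
  rw [← veblen_eq_ordinalVeblen]
  exact fun S hS => hS.2.2.2.2.1 x (hx S hS) y (hy S hS)

theorem apply_mem_closB {ξ : Ordinal} (h : ξ < α) (hξ : ξ ∈ closB θ α f) : f ξ h ∈ closB θ α f :=
  fun S hS => hS.2.2.2.2.2 ξ h (hξ S hS)

theorem mem_closB_of_le_Gamma {δ : Ordinal} (h : δ ≤ Gamma θ) : δ ∈ closB θ α f := by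
  refine Ordinal.mem_of_forall_gamma_le_mem zero_mem_closB (fun _ hx _ hy => add_mem_closB hx hy)
    (fun _ hx _ hy => veblen_mem_closB hx hy) fun o ho => ?_
  rw [Gamma_eq_gamma] at h
  simpa only [Gamma_eq_gamma] using Gamma_mem_closB (gamma_le_gamma.1 (ho.trans h))

theorem closB_subset_closB {β : Ordinal} {g : ∀ ξ, ξ < β → Ordinal}
    (h : ∀ ξ (hξ : ξ < α), ξ ∈ closB θ β g → f ξ hξ ∈ closB θ β g) :
    closB θ α f ⊆ closB θ β g :=
  closB_subset zero_mem_closB OmegaB_mem_closB (fun _ => Gamma_mem_closB)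
    (fun _ hx _ hy => add_mem_closB hx hy) (fun _ hx _ hy => veblen_mem_closB hx hy) h

end closB

-- `f` is extended by `0` outside its domain, which only adds the generator `0` again.
def closBStage (θ α : Ordinal) (f : ∀ ξ, ξ < α → Ordinal) : ℕ → Set Ordinal
  | 0 => {0, OmegaB θ} ∪ Gamma '' Set.Iic θ
  | n + 1 => closBStage θ α f n ∪ Set.image2 (· + ·) (closBStage θ α f n) (closBStage θ α f n)
      ∪ Set.image2 Ordinal.veblen (closBStage θ α f n) (closBStage θ α f n)
      ∪ (fun ξ => if h : ξ < α then f ξ h else 0) '' closBStage θ α f n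

section closBStage

variable {θ α : Ordinal} {f : ∀ ξ, ξ < α → Ordinal}

theorem monotone_closBStage : Monotone (closBStage θ α f) :=
  monotone_nat_of_le_succ fun _ _ hx => .inl (.inl (.inl hx))

theorem closB_subset_iUnion_closBStage : closB θ α f ⊆ ⋃ n, closBStage θ α f n := by
  have hpair : ∀ x ∈ ⋃ n, closBStage θ α f n, ∀ y ∈ ⋃ n, closBStage θ α f n,
      ∃ n, x ∈ closBStage θ α f n ∧ y ∈ closBStage θ α f n := by
    simp only [Set.mem_iUnion]
    rintro x ⟨m, hx⟩ y ⟨n, hy⟩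
    exact ⟨max m n, monotone_closBStage (le_max_left m n) hx,
      monotone_closBStage (le_max_right m n) hy⟩
  refine closB_subset ?_ ?_ ?_ ?_ ?_ ?_
  · exact Set.mem_iUnion.2 ⟨0, .inl (.inl rfl)⟩
  · exact Set.mem_iUnion.2 ⟨0, .inl (.inr rfl)⟩
  · exact fun β hβ => Set.mem_iUnion.2 ⟨0, .inr ⟨β, hβ, rfl⟩⟩
  · intro x hx y hy
    obtain ⟨n, hxn, hyn⟩ := hpair x hx y hy
    exact Set.mem_iUnion.2 ⟨n + 1, .inl (.inl (.inr (Set.mem_image2_of_mem hxn hyn)))⟩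
  · intro x hx y hy
    obtain ⟨n, hxn, hyn⟩ := hpair x hx y hy
    exact Set.mem_iUnion.2 ⟨n + 1, .inl (.inr (Set.mem_image2_of_mem hxn hyn))⟩
  · intro ξ h hξ
    obtain ⟨n, hn⟩ := Set.mem_iUnion.1 hξ
    exact Set.mem_iUnion.2 ⟨n + 1, .inr ⟨ξ, hn, dif_pos h⟩⟩

open Cardinal in
theorem mk_closBStage_le (n : ℕ) :
    #(closBStage θ α f n) ≤ lift.{1} (max ℵ₀ θ.card) := by
  have hκ : ℵ₀ ≤ lift.{1} (max ℵ₀ θ.card) := by simp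
  induction n with
  | zero =>
    refine (mk_union_le _ _).trans (add_le_of_le hκ ?_ (mk_image_le.trans ?_))
    · exact (Set.toFinite _).lt_aleph0.le.trans hκ
    · rw [← Order.Iio_succ, Order.succ_eq_add_one, Cardinal.mk_Iio_ordinal, Cardinal.lift_le,
      card_add_one]
      exact add_le_of_le (le_max_left _ _) (le_max_right _ _)
        (one_le_aleph0.trans (le_max_left _ _))
  | succ n ih =>
    have himage2 : ∀ g : Ordinal → Ordinal → Ordinal,
        #(Set.image2 g (closBStage θ α f n) (closBStage θ α f n)) ≤ lift.{1} (max ℵ₀ θ.card) :=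
      fun _ => mk_image2_le.trans (mul_le_of_le hκ ih ih)
    refine (mk_union_le _ _).trans (add_le_of_le hκ ?_ (mk_image_le.trans ih))
    refine (mk_union_le _ _).trans (add_le_of_le hκ ?_ (himage2 _))
    exact (mk_union_le _ _).trans (add_le_of_le hκ ih (himage2 _))

end closBStage

open Cardinal in
theorem mk_closB_le {θ α : Ordinal} (f : ∀ ξ, ξ < α → Ordinal) :
    #(closB θ α f) ≤ lift.{1} (max ℵ₀ θ.card) :=
  mk_subtype_le_of_countable_eventually_mem (l := Filter.atTop)
    (fun _ hx => have ⟨n, hn⟩ := Set.mem_iUnion.1 (closB_subset_iUnion_closBStage hx)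
      Filter.eventually_atTop.2 ⟨n, fun _ hm => monotone_closBStage hm hn⟩)
    mk_closBStage_le

open Cardinal in
theorem exists_lt_OmegaB_notMem_closB (θ α : Ordinal) (f : ∀ ξ, ξ < α → Ordinal) :
    ∃ x < OmegaB θ, x ∉ closB θ α f := by
  by_contra! h
  have hsub : Set.Iio (OmegaB θ) ⊆ closB θ α f := h
  have hle := (mk_le_mk_of_subset hsub).trans (mk_closB_le f)
  rw [Cardinal.mk_Iio_ordinal, Cardinal.lift_le, OmegaB_eq_ord, card_ord] at hle
  exact (Order.lt_succ _).not_ge hle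

section psiB

variable {θ : Ordinal}

theorem BB_mono {ξ α : Ordinal} (h : ξ ≤ α) : BB θ ξ ⊆ BB θ α :=
  closB_subset_closB fun _ hζ => apply_mem_closB (f := fun ξ _ => psiB θ ξ) (hζ.trans_le h)

theorem psiB_eq_sInf (θ α : Ordinal) : psiB θ α = sInf {β | β ∉ BB θ α} := by
  rw [psiB, WellFounded.fix_eq]
  rfl

theorem psiB_notMem_BB (θ α : Ordinal) : psiB θ α ∉ BB θ α := by
  obtain ⟨x, -, hx⟩ := exists_lt_OmegaB_notMem_closB θ α fun ξ _ => psiB θ ξ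
  rw [psiB_eq_sInf]
  exact csInf_mem (s := {β | β ∉ BB θ α}) ⟨x, hx⟩

theorem psiB_lt_OmegaB (θ α : Ordinal) : psiB θ α < OmegaB θ := by
  obtain ⟨x, hxΩ, hx⟩ := exists_lt_OmegaB_notMem_closB θ α fun ξ _ => psiB θ ξ
  rw [psiB_eq_sInf]
  exact (csInf_le' hx).trans_lt hxΩ

theorem mem_BB_of_lt_psiB {α x : Ordinal} (h : x < psiB θ α) : x ∈ BB θ α := by
  rw [psiB_eq_sInf] at h
  exact not_not.1 (notMem_of_lt_csInf' h)

theorem psiB_eq_of_notMem_of_Iio_subset {α γ : Ordinal} (hγ : γ ∉ BB θ α)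
    (hlt : Set.Iio γ ⊆ BB θ α) : psiB θ α = γ := by
  rw [psiB_eq_sInf]
  exact le_antisymm (csInf_le' hγ) (le_csInf ⟨γ, hγ⟩ fun _ hb => not_lt.1 fun h => hb (hlt h))

theorem psiB_mono {ξ α : Ordinal} (h : ξ ≤ α) : psiB θ ξ ≤ psiB θ α := by
  rw [psiB_eq_sInf θ ξ]
  exact csInf_le' fun hmem => psiB_notMem_BB θ α (BB_mono h hmem)

theorem Gamma_lt_psiB (θ α : Ordinal) : Gamma θ < psiB θ α :=
  not_le.1 fun h => psiB_notMem_BB θ α (mem_closB_of_le_Gamma h)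

end psiB

variable {θ α : Ordinal}

theorem gammaSucc_psiB_notMem_BB_succ : gammaSucc (psiB θ α) ∉ BB θ (α + 1) := by
  obtain ⟨o, ho⟩ := gammaSucc_mem_range_gamma (psiB θ α)
  have hψ := lt_gammaSucc (psiB θ α)
  rw [← ho] at hψ ⊢
  have hsub : BB θ (α + 1) ⊆ {x | x ≠ Γ_ o} := by
    refine closB_subset gamma_ne_zero.symm ?_ (fun β hβ => ?_)
      (fun _ hx _ hy => add_ne_gamma hx hy) (fun _ hx _ hy => veblen_ne_gamma hx hy)
      (fun ξ hξ _ => ?_)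
    · exact (ho ▸ gammaSucc_lt_OmegaB (psiB_lt_OmegaB θ α)).ne'
    · refine (lt_of_le_of_lt ?_ ((Gamma_lt_psiB θ α).trans hψ)).ne
      rw [Gamma_eq_gamma]
      exact gamma_le_gamma.2 hβ
    · exact ((psiB_mono (Order.lt_add_one_iff.1 hξ)).trans_lt hψ).ne
  exact fun h => hsub h rfl

theorem Iio_gammaSucc_psiB_subset_BB_succ (hα : α ∈ BB θ α) :
    Set.Iio (gammaSucc (psiB θ α)) ⊆ BB θ (α + 1) := by
  have hle : BB θ α ⊆ BB θ (α + 1) := BB_mono (Order.le_succ α)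
  have hψ : psiB θ α ∈ BB θ (α + 1) := apply_mem_closB (lt_add_one α) (hle hα)
  intro δ hδ
  refine Ordinal.mem_of_forall_gamma_le_mem zero_mem_closB (fun _ hx _ hy => add_mem_closB hx hy)
    (fun _ hx _ hy => veblen_mem_closB hx hy) fun o ho => ?_
  have hoψ : Γ_ o ≤ psiB θ α :=
    not_lt.1 fun h => (gammaSucc_le_gamma _ h).not_gt (ho.trans_lt hδ)
  rcases hoψ.lt_or_eq with h | h
  · exact hle (mem_BB_of_lt_psiB h)
  · exact h ▸ hψ

theorem psiB_succ_of_mem (hα : α ∈ BB θ α) : psiB θ (α + 1) = gammaSucc (psiB θ α) :=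
  psiB_eq_of_notMem_of_Iio_subset gammaSucc_psiB_notMem_BB_succ
    (Iio_gammaSucc_psiB_subset_BB_succ hα)

theorem BB_succ_of_notMem (hα : α ∉ BB θ α) : BB θ (α + 1) = BB θ α := by
  refine (BB_mono (Order.le_succ α)).antisymm' (closB_subset_closB fun ξ hξ hmem => ?_)
  rcases (Order.lt_add_one_iff.1 hξ).lt_or_eq with h | rfl
  · exact apply_mem_closB h hmem
  · exact absurd hmem hα

theorem psiB_succ_of_notMem (hα : α ∉ BB θ α) : psiB θ (α + 1) = psiB θ α := by
  rw [psiB_eq_sInf, psiB_eq_sInf, BB_succ_of_notMem hα]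

theorem stmt14 (θ α : Ordinal) :
    (α ∈ BB θ α → psiB θ (α + 1) = gammaSucc (psiB θ α)) ∧
    (α ∉ BB θ α → psiB θ (α + 1) = psiB θ α ∧ BB θ (α + 1) = BB θ α) :=
  ⟨psiB_succ_of_mem, fun hα => ⟨psiB_succ_of_notMem hα, BB_succ_of_notMem hα⟩⟩
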